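/- arXiv:1810.07921 — 2 statements merged into one kernel-verified Lean document; each statement's English description precedes it below -/
import Mathlib

section
/- The function θ(t) = (t²+1)·erfc(t/√2) - √(2/π)·e^{-t²/2}·t is strictly decreasing on [0, ∞), satisfies θ(0) = 1, and tends to 0 as t → ∞. -/
open MeasureTheory Real

/-- The complementary error function `erfc z = (2/√π) ∫_z^∞ e^{-s²} ds`. -/
noncomputable def erfc (z : ℝ) : ℝ := (2 / Real.sqrt π) * ∫ s in Set.Ioi z, Real.exp (-s ^ 2)

/-- The closed form of θ(t) = E[(|h| - t)₊²]. -/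
noncomputable def theta (t : ℝ) : ℝ :=
  (t ^ 2 + 1) * erfc (t / Real.sqrt 2) - Real.sqrt (2 / π) * Real.exp (-t ^ 2 / 2) * t

/-!
Differentiating, `θ'(t) = 2 (t erfc(t/√2) - √(2/π) e^{-t²/2})`. Mills' inequality
`∫_z^∞ e^{-s²} ds < e^{-z²} / (2z)` for `z > 0`, obtained by integrating `(s - z) e^{-s²} > 0`
against the explicit `∫_z^∞ s e^{-s²} ds = e^{-z²}/2`, makes this negative for `t > 0`.
The same inequality gives `|θ(t)| ≤ √(2/π) t e^{-t²/2}` for `t ≥ 1`, hence `θ(t) → 0`,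
and `θ(0) = erfc 0 = 1` is the Gaussian integral.
-/

open Set Filter Topology

theorem setIntegral_pos_of_forall_pos {X : Type*} [MeasurableSpace X] {μ : Measure X}
    {s : Set X} {f : X → ℝ} (hs : MeasurableSet s) (hμs : μ s ≠ 0)
    (hf : IntegrableOn f s μ) (hpos : ∀ x ∈ s, 0 < f x) : 0 < ∫ x in s, f x ∂μ := by
  rw [setIntegral_pos_iff_support_of_nonneg_ae ((ae_restrict_iff' hs).2 <|
    .of_forall fun x hx => (hpos x hx).le) hf,
    show Function.support f ∩ s = s from inter_eq_right.2 fun x hx => (hpos x hx).ne']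
  exact pos_iff_ne_zero.2 hμs

theorem hasDerivAt_integral_Ioi {E : Type*} [NormedAddCommGroup E] [NormedSpace ℝ E]
    [CompleteSpace E] {f : ℝ → E} (hf : Integrable f) {z : ℝ} (hfz : ContinuousAt f z) :
    HasDerivAt (fun z => ∫ s in Ioi z, f s) (-f z) z := by
  have hFTC : HasDerivAt (fun z => ∫ s in (0 : ℝ)..z, f s) (f z) z :=
    intervalIntegral.integral_hasDerivAt_right hf.intervalIntegrable
      hf.aestronglyMeasurable.stronglyMeasurableAtFilter hfz
  have htail : (fun z => ∫ s in Ioi z, f s) =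
      fun z => (∫ s in Ioi (0 : ℝ), f s) - ∫ s in (0 : ℝ)..z, f s := by
    ext z
    exact eq_sub_of_add_eq' <|
      intervalIntegral.integral_interval_add_Ioi hf.integrableOn hf.integrableOn
  simpa [htail] using hFTC.const_sub _

theorem integrable_exp_neg_sq : Integrable fun s : ℝ => exp (-s ^ 2) := by
  simpa using integrable_exp_neg_mul_sq one_pos

theorem integrable_mul_exp_neg_sq : Integrable fun s : ℝ => s * exp (-s ^ 2) := by
  simpa using integrable_mul_exp_neg_mul_sq one_pos

theorem integral_Ioi_mul_exp_neg_sq (z : ℝ) :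
    ∫ s in Ioi z, s * exp (-s ^ 2) = exp (-z ^ 2) / 2 := by
  have hderiv (x : ℝ) : HasDerivAt (fun s => -exp (-s ^ 2) / 2) (x * exp (-x ^ 2)) x := by
    refine ((hasDerivAt_pow 2 x).fun_neg.exp.fun_neg.div_const 2).congr_deriv ?_
    ring
  have hlim : Tendsto (fun s => -exp (-s ^ 2) / 2) atTop (𝓝 0) := by
    simpa using ((tendsto_exp_atBot.comp <| tendsto_neg_atTop_atBot.comp <|
      tendsto_pow_atTop two_ne_zero).neg.div_const 2)
  rw [integral_Ioi_of_hasDerivAt_of_tendsto' (fun x _ => hderiv x)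
    integrable_mul_exp_neg_sq.integrableOn hlim]
  ring

theorem integral_Ioi_exp_neg_sq_lt {z : ℝ} (hz : 0 < z) :
    ∫ s in Ioi z, exp (-s ^ 2) < exp (-z ^ 2) / (2 * z) := by
  have hpos : 0 < ∫ s in Ioi z, (s * exp (-s ^ 2) - z * exp (-s ^ 2)) :=
    setIntegral_pos_of_forall_pos measurableSet_Ioi (by simp)
      (integrable_mul_exp_neg_sq.sub (integrable_exp_neg_sq.const_mul z)).integrableOn
      fun s hs => by rw [← sub_mul]; exact mul_pos (sub_pos.2 hs) (exp_pos _)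
  rw [integral_sub integrable_mul_exp_neg_sq.integrableOn
    (integrable_exp_neg_sq.const_mul z).integrableOn, integral_const_mul,
    integral_Ioi_mul_exp_neg_sq] at hpos
  rw [lt_div_iff₀ (by positivity)]
  linarith

theorem erfc_nonneg (z : ℝ) : 0 ≤ erfc z :=
  mul_nonneg (by positivity) (setIntegral_nonneg measurableSet_Ioi fun _ _ => (exp_pos _).le)

theorem erfc_zero : erfc 0 = 1 := by
  have hπ : 0 < √π := sqrt_pos.2 pi_pos
  have hgauss : ∫ s in Ioi (0 : ℝ), exp (-s ^ 2) = √π / 2 := by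
    simpa using integral_gaussian_Ioi 1
  rw [erfc, hgauss]
  field_simp

theorem hasDerivAt_erfc (z : ℝ) : HasDerivAt erfc (-(2 / √π * exp (-z ^ 2))) z := by
  have := (hasDerivAt_integral_Ioi integrable_exp_neg_sq (by fun_prop : Continuous _).continuousAt
    (z := z)).const_mul (2 / √π)
  rw [mul_neg] at this
  exact this

theorem erfc_lt_exp_neg_sq_div {z : ℝ} (hz : 0 < z) : erfc z < exp (-z ^ 2) / (√π * z) := by
  have hπ : 0 < √π := sqrt_pos.2 pi_pos
  calc erfc z < 2 / √π * (exp (-z ^ 2) / (2 * z)) :=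
        mul_lt_mul_of_pos_left (integral_Ioi_exp_neg_sq_lt hz) (by positivity)
    _ = exp (-z ^ 2) / (√π * z) := by field_simp

theorem sqrt_two_div_pi_eq : √(2 / π) = 2 / √π / √2 := by
  rw [sqrt_div zero_le_two]
  field_simp
  exact sq_sqrt zero_le_two

theorem hasDerivAt_erfc_div_sqrt_two (t : ℝ) :
    HasDerivAt (fun t => erfc (t / √2)) (-(√(2 / π) * exp (-t ^ 2 / 2))) t := by
  refine ((hasDerivAt_erfc _).comp t ((hasDerivAt_id' t).div_const √2)).congr_deriv ?_
  rw [div_pow, sq_sqrt zero_le_two, ← neg_div, sqrt_two_div_pi_eq]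
  ring

theorem erfc_div_sqrt_two_lt {t : ℝ} (ht : 0 < t) :
    erfc (t / √2) < √(2 / π) * exp (-t ^ 2 / 2) / t := by
  have h2 : 0 < √2 := sqrt_pos.2 zero_lt_two
  convert erfc_lt_exp_neg_sq_div (div_pos ht h2) using 1
  rw [div_pow, sq_sqrt zero_le_two, neg_div, sqrt_two_div_pi_eq]
  field_simp
  rw [sq_sqrt zero_le_two]

theorem tendsto_exp_neg_sq_div_two_mul_atTop :
    Tendsto (fun t : ℝ => exp (-t ^ 2 / 2) * t) atTop (𝓝 0) := by
  refine ((tendsto_rpow_abs_mul_exp_neg_mul_sq_cocompact one_half_pos 1).mono_left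
    atTop_le_cocompact).congr' ?_
  filter_upwards [eventually_ge_atTop 0] with t ht
  rw [rpow_one, abs_of_nonneg ht, mul_comm]
  ring_nf

theorem hasDerivAt_theta (t : ℝ) :
    HasDerivAt theta (2 * (t * erfc (t / √2) - √(2 / π) * exp (-t ^ 2 / 2))) t := by
  have hexp : HasDerivAt (fun t => exp (-t ^ 2 / 2)) (exp (-t ^ 2 / 2) * (-(2 * t) / 2)) t := by
    simpa using ((hasDerivAt_pow 2 t).fun_neg.div_const 2).exp
  refine ((((hasDerivAt_pow 2 t).add_const 1).mul (hasDerivAt_erfc_div_sqrt_two t)).sub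
    ((hexp.const_mul √(2 / π)).mul (hasDerivAt_id' t))).congr_deriv ?_
  push_cast
  ring

theorem theta_zero : theta 0 = 1 := by
  simp [theta, erfc_zero]

theorem theta_strictAntiOn : StrictAntiOn theta (Ici 0) := by
  refine strictAntiOn_of_deriv_neg (convex_Ici 0)
    (fun t _ => (hasDerivAt_theta t).continuousAt.continuousWithinAt) fun t ht => ?_
  rw [interior_Ici] at ht
  have := erfc_div_sqrt_two_lt ht
  rw [lt_div_iff₀' ht] at this
  rw [(hasDerivAt_theta t).deriv]
  linarith

theorem abs_theta_le {t : ℝ} (ht : 1 ≤ t) :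
    |theta t| ≤ √(2 / π) * (exp (-t ^ 2 / 2) * t) := by
  have ht0 : 0 < t := one_pos.trans_le ht
  have hA : 0 ≤ √(2 / π) * exp (-t ^ 2 / 2) := by positivity
  have hupper : (t ^ 2 + 1) * erfc (t / √2) ≤ 2 * (√(2 / π) * exp (-t ^ 2 / 2) * t) :=
    calc (t ^ 2 + 1) * erfc (t / √2) ≤ (t ^ 2 + 1) * (√(2 / π) * exp (-t ^ 2 / 2) / t) :=
          mul_le_mul_of_nonneg_left (erfc_div_sqrt_two_lt ht0).le (by positivity)
      _ ≤ 2 * (√(2 / π) * exp (-t ^ 2 / 2) * t) := by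
          rw [mul_div_assoc', div_le_iff₀ ht0]
          nlinarith [mul_nonneg hA (by nlinarith : 0 ≤ t ^ 2 - 1)]
  have hlower := mul_nonneg (by positivity : 0 ≤ t ^ 2 + 1) (erfc_nonneg (t / √2))
  rw [abs_le, theta]
  constructor <;> linarith

/-- θ is strictly decreasing on [0,∞), θ(0) = 1, and θ(t) → 0 as t → ∞. -/
theorem stmt2 :
    StrictAntiOn theta (Set.Ici 0) ∧ theta 0 = 1 ∧
      Filter.Tendsto theta Filter.atTop (nhds 0) := by
  refine ⟨theta_strictAntiOn, theta_zero, squeeze_zero_norm' ?_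
    (by simpa only [mul_zero] using tendsto_exp_neg_sq_div_two_mul_atTop.const_mul √(2 / π))⟩
  filter_upwards [eventually_ge_atTop 1] with t ht
  exact abs_theta_le ht
end

section
/- For all x > 0 and 0 ≤ a ≤ 1, Γ(x + a)/Γ(x) ≥ x·(x + a)^{a - 1}. -/
/-- Wendel's inequality: for x > 0 and 0 ≤ a ≤ 1, Γ(x+a)/Γ(x) ≥ x·(x+a)^{a-1}. -/
theorem stmt5 (x a : ℝ) (hx : 0 < x) (ha0 : 0 ≤ a) (ha1 : a ≤ 1) :
    x * (x + a) ^ (a - 1) ≤ Real.Gamma (x + a) / Real.Gamma x := by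
  have hxa : 0 < x + a := by linarith
  have hG : 0 < Real.Gamma x := Real.Gamma_pos_of_pos hx
  have hGa : 0 < Real.Gamma (x + a) := Real.Gamma_pos_of_pos hxa
  rcases eq_or_lt_of_le ha0 with h0 | h0
  · subst h0
    simp only [add_zero, zero_sub] at *
    rw [div_self hG.ne', Real.rpow_neg_one]
    rw [mul_inv_le_iff₀ hx, one_mul]
  rcases eq_or_lt_of_le ha1 with h1 | h1
  · subst h1
    rw [Real.Gamma_add_one hx.ne', sub_self, Real.rpow_zero, mul_one,
      mul_div_assoc, div_self hG.ne', mul_one]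
  -- main case 0 < a < 1
  have key := Real.Gamma_mul_add_mul_le_rpow_Gamma_mul_rpow_Gamma hxa
    (by linarith : (0:ℝ) < x + a + 1) h0 (by linarith : (0:ℝ) < 1 - a)
    (by ring)
  have harg : a * (x + a) + (1 - a) * (x + a + 1) = x + 1 := by ring
  rw [harg, Real.Gamma_add_one hx.ne',
    Real.Gamma_add_one hxa.ne'] at key
  have hrw : Real.Gamma (x + a) ^ a * ((x + a) * Real.Gamma (x + a)) ^ (1 - a)
      = Real.Gamma (x + a) * (x + a) ^ (1 - a) := by
    rw [Real.mul_rpow hxa.le hGa.le, ← mul_assoc, mul_comm (Real.Gamma (x+a) ^ a),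
      mul_assoc, ← Real.rpow_add hGa, mul_comm]
    norm_num
  rw [hrw] at key
  rw [le_div_iff₀ hG]
  calc x * (x + a) ^ (a - 1) * Real.Gamma x
      = x * Real.Gamma x * (x + a) ^ (a - 1) := by ring
    _ ≤ Real.Gamma (x + a) * (x + a) ^ (1 - a) * (x + a) ^ (a - 1) := by
        exact mul_le_mul_of_nonneg_right key (Real.rpow_nonneg hxa.le _)
    _ = Real.Gamma (x + a) := by
        rw [mul_assoc, ← Real.rpow_add hxa]
        norm_num
end
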